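/- Let P be the n×n dual complex matrix with P_{i,i+1} = 1 for i = 1,…,n−1, P_{n,1} = p for a unit dual complex number p = e^{iθ}, and zeros elsewhere. Then the eigenvalues of the dual complex Hermitian matrix A = P + P* are exactly 2cos((θ + 2πj)/n) for j = 0,…,n−1, where cos is the dual cosine function. -/

import Mathlib

open TrivSqZeroExt

noncomputable section

/-- The dual exponential `e^{iθ}` of a dual angle `θ = θ_s + θ_d ε`. -/
def dcexp (θ : DualNumber ℝ) : DualNumber ℂ :=
  inl (Complex.exp (Complex.I * (θ.fst : ℂ))) +
    inr (Complex.I * (θ.snd : ℂ) * Complex.exp (Complex.I * (θ.fst : ℂ)))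

/-- Conjugate of a dual complex number. -/
def dstar (p : DualNumber ℂ) : DualNumber ℂ :=
  inl ((starRingEnd ℂ) p.fst) + inr ((starRingEnd ℂ) p.snd)

/-- The `n×n` dual complex matrix `P` with `P_{i,i+1} = 1` for `i = 1,…,n-1`,
`P_{n,1} = p`, and zeros elsewhere. -/
def cycMat (n : ℕ) (p : DualNumber ℂ) : Matrix (Fin n) (Fin n) (DualNumber ℂ) :=
  fun i j =>
    if (j : ℕ) = (i : ℕ) + 1 then 1
    else if (i : ℕ) = n - 1 ∧ (j : ℕ) = 0 then p else 0

/-- Conjugate transpose of a dual complex matrix. -/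
def dconjT {m n : Type*} (M : Matrix m n (DualNumber ℂ)) : Matrix n m (DualNumber ℂ) :=
  fun i j => dstar (M j i)

/-! Let `u_j = e^{iφ_j}` with dual angle `φ_j = (θ + 2πj)/n`, so that `u_j^n = e^{iθ}` and
`u_j⁻¹ = ū_j`. Writing `P` for the cycle matrix twisted by `p = e^{iθ}`, the geometric vector
`(u_j^k)_k` is a right eigenvector and `(ū_j^k)_k` a left eigenvector of `P + P*`, both for
`u_j + ū_j = 2 cos φ_j`. Conversely, if `A x = x λ` with `x` appreciable, pairing with the left
eigenvectors gives `⟨ū_j^•, x⟩ λ = ⟨ū_j^•, x⟩ 2 cos φ_j` for all `j`. The standard parts of the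
`ū_j` are distinct, so their Vandermonde matrix is invertible over `ℂ` and some pairing has nonzero
standard part; that pairing is a unit of the dual numbers and can be cancelled. -/

open Matrix

variable {R : Type*}

def twistedCycle [Zero R] [One R] (n : ℕ) (p : R) : Matrix (Fin n) (Fin n) R :=
  fun i j =>
    if (j : ℕ) = (i : ℕ) + 1 then 1
    else if (i : ℕ) = n - 1 ∧ (j : ℕ) = 0 then p else 0

lemma twistedCycle_map {S : Type*} [NonAssocSemiring R] [NonAssocSemiring S] (f : R →+* S)
    (n : ℕ) (p : R) : (twistedCycle n p).map f = twistedCycle n (f p) := by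
  ext i j
  simp only [map_apply, twistedCycle]
  split_ifs <;> simp

section
variable [NonAssocSemiring R] {n : ℕ}

lemma twistedCycle_mulVec_apply (p : R) (x : Fin n → R) (i : Fin n) :
    (twistedCycle n p *ᵥ x) i =
      if h : (i : ℕ) + 1 < n then x ⟨i + 1, h⟩ else p * x ⟨0, i.pos⟩ := by
  simp only [mulVec, dotProduct, twistedCycle]
  split_ifs with h
  · rw [Fintype.sum_eq_single ⟨i + 1, h⟩ fun j hj => ?_]
    · simp
    · rw [if_neg (fun h' => hj (Fin.ext h')), if_neg (by omega), zero_mul]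
  · rw [Fintype.sum_eq_single ⟨0, i.pos⟩ fun j hj => ?_]
    · rw [if_neg (show ¬0 = (i : ℕ) + 1 by omega), if_pos (show (i : ℕ) = n - 1 ∧ 0 = 0 by omega)]
    · rw [if_neg (by omega), if_neg (fun h' => hj (Fin.ext h'.2)), zero_mul]

lemma transpose_twistedCycle_mulVec_apply (q : R) (x : Fin n → R) (i : Fin n) :
    ((twistedCycle n q)ᵀ *ᵥ x) i =
      if h : 0 < (i : ℕ) then x ⟨i - 1, by omega⟩ else q * x ⟨n - 1, by omega⟩ := by
  simp only [mulVec, dotProduct, transpose_apply, twistedCycle]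
  split_ifs with h
  · rw [Fintype.sum_eq_single ⟨i - 1, by omega⟩ fun j hj => ?_]
    · rw [if_pos (show (i : ℕ) = i - 1 + 1 by omega), one_mul]
    · rw [if_neg (fun h' => hj (Fin.ext (show (j : ℕ) = i - 1 by omega))), if_neg (by omega),
        zero_mul]
  · rw [Fintype.sum_eq_single ⟨n - 1, by omega⟩ fun j hj => ?_]
    · rw [if_neg (show ¬(i : ℕ) = n - 1 + 1 by omega),
        if_pos (show n - 1 = n - 1 ∧ (i : ℕ) = 0 by omega)]
    · rw [if_neg (by omega), if_neg (fun h' => hj (Fin.ext h'.1)), zero_mul]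

end

section
variable [CommSemiring R] {n : ℕ} {p q z w : R}

lemma twistedCycle_mulVec_pow (h : z ^ n = p) :
    twistedCycle n p *ᵥ (fun k : Fin n => z ^ (k : ℕ)) = fun k : Fin n => z ^ (k : ℕ) * z := by
  funext i
  rw [twistedCycle_mulVec_apply]
  split_ifs with hi
  · exact pow_succ z i
  · rw [← h, pow_zero, mul_one, ← pow_succ]
    congr 1
    omega

lemma transpose_twistedCycle_mulVec_pow (hw : w ^ n = q) (hzw : z * w = 1) :
    (twistedCycle n q)ᵀ *ᵥ (fun k : Fin n => z ^ (k : ℕ)) = fun k : Fin n => z ^ (k : ℕ) * w := by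
  funext i
  rw [transpose_twistedCycle_mulVec_apply]
  split_ifs with hi
  · obtain ⟨m, hm⟩ : ∃ m, (i : ℕ) = m + 1 := ⟨i - 1, by omega⟩
    simp only [hm, Nat.add_sub_cancel, pow_succ, mul_assoc, hzw, mul_one]
  · have hi0 : (i : ℕ) = 0 := by omega
    obtain ⟨m, rfl⟩ : ∃ m, n = m + 1 := ⟨n - 1, by omega⟩
    simp only [hi0, Nat.add_sub_cancel, pow_zero, one_mul, ← hw]
    rw [pow_succ', mul_assoc, ← mul_pow, mul_comm w z, hzw, one_pow, mul_one]

lemma twistedCycle_add_transpose_mulVec_pow (hz : z ^ n = p) (hw : w ^ n = q) (hzw : z * w = 1) :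
    (twistedCycle n p + (twistedCycle n q)ᵀ) *ᵥ (fun k : Fin n => z ^ (k : ℕ)) =
      fun k : Fin n => z ^ (k : ℕ) * (z + w) := by
  rw [add_mulVec, twistedCycle_mulVec_pow hz, transpose_twistedCycle_mulVec_pow hw hzw]
  funext k
  exact (mul_add _ _ _).symm

lemma pow_vecMul_twistedCycle_add_transpose (hz : z ^ n = p) (hw : w ^ n = q) (hzw : z * w = 1) :
    (fun k : Fin n => w ^ (k : ℕ)) ᵥ* (twistedCycle n p + (twistedCycle n q)ᵀ) =
      fun k : Fin n => w ^ (k : ℕ) * (z + w) := by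
  rw [vecMul_add, vecMul_transpose, ← mulVec_transpose, twistedCycle_mulVec_pow hw,
    transpose_twistedCycle_mulVec_pow hz (by rwa [mul_comm])]
  funext k
  simp only [Pi.add_apply, ← mul_add]

end

lemma dotProduct_mul_eq_of_mulVec_of_vecMul {m : Type*} [Fintype m] [CommSemiring R]
    {A : Matrix m m R} {x y : m → R} {a b : R} (hx : A *ᵥ x = fun i => x i * a)
    (hy : y ᵥ* A = fun i => y i * b) : (y ⬝ᵥ x) * a = (y ⬝ᵥ x) * b :=
  calc (y ⬝ᵥ x) * a = y ⬝ᵥ (A *ᵥ x) := by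
        rw [hx, dotProduct, dotProduct, Finset.sum_mul]; simp only [mul_assoc]
    _ = (y ᵥ* A) ⬝ᵥ x := dotProduct_mulVec y A x
    _ = (y ⬝ᵥ x) * b := by
        rw [hy, dotProduct, dotProduct, Finset.sum_mul]; simp only [mul_right_comm]

lemma exists_map_pow_dotProduct_ne_zero {K : Type*} [CommRing R] [CommRing K] [IsDomain K]
    (f : R →+* K) {n : ℕ} (s : Fin n → R) (hs : Function.Injective fun j => f (s j))
    (x : Fin n → R) (hx : (fun i => f (x i)) ≠ 0) :
    ∃ j, f ((fun k : Fin n => s j ^ (k : ℕ)) ⬝ᵥ x) ≠ 0 := by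
  by_contra! h
  refine hx (eq_zero_of_mulVec_eq_zero (det_vandermonde_ne_zero_iff.mpr hs) (funext fun j => ?_))
  simpa [vandermonde, mulVec, dotProduct, map_sum] using h j

lemma cycMat_eq_twistedCycle (n : ℕ) (p : DualNumber ℂ) : cycMat n p = twistedCycle n p := rfl

def dstarHom : DualNumber ℂ →+* DualNumber ℂ where
  toFun := dstar
  map_one' := by ext <;> simp [dstar]
  map_mul' a b := by ext <;> simp [dstar]
  map_zero' := by ext <;> simp [dstar]
  map_add' a b := by ext <;> simp [dstar]

lemma dconjT_cycMat (n : ℕ) (p : DualNumber ℂ) :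
    dconjT (cycMat n p) = (twistedCycle n (dstar p))ᵀ := by
  rw [cycMat_eq_twistedCycle, show dstar p = dstarHom p from rfl, ← twistedCycle_map]
  rfl

@[simp] lemma dcexp_fst (t : DualNumber ℝ) : (dcexp t).fst = Complex.exp (Complex.I * t.fst) := by
  simp [dcexp]

lemma dcexp_zero : dcexp 0 = 1 := by
  ext <;> simp [dcexp]

lemma dcexp_add (s t : DualNumber ℝ) : dcexp (s + t) = dcexp s * dcexp t := by
  ext
  · simp [dcexp, mul_add, Complex.exp_add]
  · simp [dcexp, mul_add, Complex.exp_add]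
    ring

lemma dcexp_nsmul (k : ℕ) (t : DualNumber ℝ) : dcexp (k • t) = dcexp t ^ k := by
  induction k with
  | zero => rw [zero_smul, pow_zero, dcexp_zero]
  | succ k ih => rw [succ_nsmul, dcexp_add, ih, pow_succ]

lemma dcexp_inl_two_pi_mul_nat (j : ℕ) : dcexp (inl (2 * Real.pi * j)) = 1 := by
  ext
  · rw [dcexp_fst, fst_inl, Complex.ofReal_mul, Complex.ofReal_natCast,
      show Complex.I * (↑(2 * Real.pi) * j) = j * (2 * Real.pi * Complex.I) by push_cast; ring]
    exact Complex.exp_nat_mul_two_pi_mul_I j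
  · simp [dcexp]

lemma dcexp_mul_dstar (t : DualNumber ℝ) : dcexp t * dstar (dcexp t) = 1 := by
  ext <;> simp [dcexp, dstar, ← Complex.exp_conj, ← Complex.exp_add]
  ring

lemma dcexp_add_dstar (t : DualNumber ℝ) :
    dcexp t + dstar (dcexp t) =
      inl ((2 * Real.cos t.fst : ℝ) : ℂ) + inr ((-(2 * t.snd * Real.sin t.fst) : ℝ) : ℂ) := by
  ext <;> simp [dcexp, dstar, Complex.ext_iff, Complex.exp_re, Complex.exp_im,
    Complex.cos_ofReal_re, Complex.sin_ofReal_re] <;> ring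

def nthRootAngle (n : ℕ) (θ : DualNumber ℝ) (j : ℕ) : DualNumber ℝ :=
  inl ((θ.fst + 2 * Real.pi * j) / n) + inr (θ.snd / n)

@[simp] lemma nthRootAngle_fst (n : ℕ) (θ : DualNumber ℝ) (j : ℕ) :
    (nthRootAngle n θ j).fst = (θ.fst + 2 * Real.pi * j) / n := by
  simp [nthRootAngle]

@[simp] lemma nthRootAngle_snd (n : ℕ) (θ : DualNumber ℝ) (j : ℕ) :
    (nthRootAngle n θ j).snd = θ.snd / n := by
  simp [nthRootAngle]

lemma dcexp_nthRootAngle_pow {n : ℕ} (hn : n ≠ 0) (θ : DualNumber ℝ) (j : ℕ) :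
    dcexp (nthRootAngle n θ j) ^ n = dcexp θ := by
  have hangle : n • nthRootAngle n θ j = θ + inl (2 * Real.pi * j) := by
    ext <;> simp [nthRootAngle, nsmul_eq_mul] <;> field_simp
  rw [← dcexp_nsmul, hangle, dcexp_add, dcexp_inl_two_pi_mul_nat, mul_one]

lemma injective_exp_nthRootAngle {n : ℕ} (hn : n ≠ 0) (θ : DualNumber ℝ) :
    Function.Injective fun j : Fin n => Complex.exp (Complex.I * (nthRootAngle n θ j).fst) := by
  have hroot (j : ℕ) : Complex.exp (Complex.I * (nthRootAngle n θ j).fst) =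
      Complex.exp (Complex.I * θ.fst / n) * Complex.exp (2 * Real.pi * Complex.I / n) ^ j := by
    rw [← Complex.exp_nat_mul, ← Complex.exp_add, nthRootAngle_fst]
    congr 1
    push_cast
    ring
  intro j k h
  simp only [hroot] at h
  exact Fin.ext <| (Complex.isPrimitiveRoot_exp n hn).pow_inj j.isLt k.isLt
    (mul_left_cancel₀ (Complex.exp_ne_zero _) h)

/-- The eigenvalues of the dual complex Hermitian matrix `A = P + P*`, where `P` is the
cycle matrix with unit gain `p = e^{iθ}`, are exactly the dual cosines
`2 cos((θ + 2πj)/n)` for `j = 0, …, n-1`. -/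
theorem cycle_adjacency_eigenvalues (n : ℕ) (hn : 0 < n) (θ : DualNumber ℝ)
    (lam : DualNumber ℂ) :
    (∃ x : Fin n → DualNumber ℂ, (fun i => (x i).fst) ≠ 0 ∧
        (cycMat n (dcexp θ) + dconjT (cycMat n (dcexp θ))).mulVec x =
          fun i => x i * lam) ↔
      ∃ j : ℕ, j < n ∧
        lam = inl ((2 * Real.cos ((θ.fst + 2 * Real.pi * j) / n) : ℝ) : ℂ) +
          inr (((-(2 * (θ.snd / n) * Real.sin ((θ.fst + 2 * Real.pi * j) / n)) : ℝ) : ℂ)) := by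
  set u : ℕ → DualNumber ℂ := fun j => dcexp (nthRootAngle n θ j)
  have hu (j : ℕ) : u j * dstar (u j) = 1 := dcexp_mul_dstar _
  have hun (j : ℕ) : u j ^ n = dcexp θ := dcexp_nthRootAngle_pow hn.ne' θ j
  have hun' (j : ℕ) : dstar (u j) ^ n = dstar (dcexp θ) := by
    rw [← hun j]; exact (map_pow dstarHom (u j) n).symm
  have hμ (j : ℕ) : u j + dstar (u j) =
      inl ((2 * Real.cos ((θ.fst + 2 * Real.pi * j) / n) : ℝ) : ℂ) +
        inr (((-(2 * (θ.snd / n) * Real.sin ((θ.fst + 2 * Real.pi * j) / n)) : ℝ) : ℂ)) := by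
    rw [dcexp_add_dstar, nthRootAngle_fst, nthRootAngle_snd]
  rw [dconjT_cycMat, cycMat_eq_twistedCycle]
  constructor
  · rintro ⟨x, hx0, hx⟩
    have hinj : Function.Injective fun j : Fin n => (dstar (u j)).fst := by
      simpa [u, dstar, Function.comp_def] using
        (starRingEnd ℂ).injective.comp (injective_exp_nthRootAngle hn.ne' θ)
    obtain ⟨j, hj⟩ := exists_map_pow_dotProduct_ne_zero (fstHom ℂ ℂ ℂ).toRingHom
      (fun j : Fin n => dstar (u j)) hinj x hx0
    refine ⟨j, j.isLt, ?_⟩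
    rw [← hμ]
    exact (isUnit_iff_isUnit_fst.mpr (Ne.isUnit hj)).mul_left_cancel
      (dotProduct_mul_eq_of_mulVec_of_vecMul hx
        (pow_vecMul_twistedCycle_add_transpose (hun j) (hun' j) (hu j)))
  · rintro ⟨j, -, rfl⟩
    refine ⟨fun k => u j ^ (k : ℕ), fun h => ?_, ?_⟩
    · simpa using congrFun h ⟨0, hn⟩
    · rw [← hμ]
      exact twistedCycle_add_transpose_mulVec_pow (hun j) (hun' j) (hu j)
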